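/- Readd-pseudo-decreasing refactoring theorem in the presence of modify operations: for every base program B : α → Option β and every list L of generalized conditional delta operations, there exist a base program B' and a list L' of generalized conditional delta operations such that: (i) for every product p, variant B' L' p = variant B L p; (ii) every add of L', i.e. every operation (c', k, Sum.inl (some d)), satisfies B' k ≠ none (it is a readd of a reference declared in the base program); (iii) every modify of L', i.e. every operation (c', k, Sum.inr f), satisfies ∃ c, (c, k, Sum.inr f) ∈ L (the refactoring does not introduce new modify operations); and (iv) for every reference k, either B' k = B k, or B k = none and there exist c and d with (c, k, Sum.inl (some d)) ∈ L and B' k = some d. -/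

import Mathlib

/-!
Seed the base program with one of the contents added to each reference that `B` lacks; every
add of `L` then targets a declared reference. Prefixing `L` with unconditional operations that
set every reference touched by `L` back to its value in `B` makes the seeded base behave, for
every product, exactly like `B`; those operations are removes, or adds of references that `B`
already declares.
-/

open Classical in
/-- The variant generated for product `p` from base program `B` and a list `L` of
generalized conditional delta operations (adds/removes via `Sum.inl`, modifies via
`Sum.inr`). -/
noncomputable def variant {α β ρ : Type*} (B : α → Option β)
    (L : List ((ρ → Prop) × α × (Option β ⊕ (β → β)))) (p : ρ) : α → Option β :=
  L.foldl (fun P op =>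
    if op.1 p then
      match op.2.2 with
      | Sum.inl o => Function.update P op.2.1 o
      | Sum.inr f => Function.update P op.2.1 (Option.map f (P op.2.1))
    else P) B

abbrev DeltaOp (α β ρ : Type*) := (ρ → Prop) × α × (Option β ⊕ (β → β))

section Variant

variable {α β ρ : Type*}

theorem variant_append (P : α → Option β) (M N : List (DeltaOp α β ρ)) (p : ρ) :
    variant P (M ++ N) p = variant (variant P M p) N p :=
  List.foldl_append

def resetOps (Q : α → Option β) (ks : List α) : List (DeltaOp α β ρ) :=
  ks.map fun k => (fun _ => True, k, Sum.inl (Q k))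

-- Classical decidability, so that `k ∈ ks` is decided by the instance `variant` uses for `k = a`.
open Classical in
theorem variant_resetOps (P Q : α → Option β) (ks : List α) (p : ρ) :
    variant P (resetOps Q ks) p = fun k => if k ∈ ks then Q k else P k := by
  induction ks generalizing P with
  | nil => rfl
  | cons a ks ih =>
    have hstep : variant P (resetOps Q (a :: ks)) p =
        variant (Function.update P a (Q a)) (resetOps Q ks) p := by
      simp [variant, resetOps]
    rw [hstep]
    funext k
    by_cases hk : k = a
    · subst hk
      simp [ih]
    · simp [ih, hk]

theorem update_eq_of_mem_resetOps {Q : α → Option β} {ks : List α} {op : DeltaOp α β ρ}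
    (h : op ∈ resetOps Q ks) : op.2.2 = Sum.inl (Q op.2.1) := by
  obtain ⟨k, -, rfl⟩ := List.mem_map.mp h
  rfl

end Variant

section Seeding

variable {α β ρ : Type*}

open Classical in
noncomputable def addedContent (L : List (DeltaOp α β ρ)) (k : α) : Option β :=
  if h : ∃ d c, (c, k, Sum.inl (some d)) ∈ L then some h.choose else none

theorem exists_mem_of_addedContent_eq_some {L : List (DeltaOp α β ρ)} {k : α} {d : β}
    (h : addedContent L k = some d) : ∃ c, (c, k, Sum.inl (some d)) ∈ L := by
  unfold addedContent at h
  split_ifs at h with hex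
  exact Option.some_injective _ h ▸ hex.choose_spec

theorem addedContent_ne_none_of_mem {L : List (DeltaOp α β ρ)} {c : ρ → Prop} {k : α} {d : β}
    (h : (c, k, Sum.inl (some d)) ∈ L) : addedContent L k ≠ none := by
  simp [addedContent, dif_pos (⟨d, c, h⟩ : ∃ d c, (c, k, Sum.inl (some d)) ∈ L)]

noncomputable def seededBase (B : α → Option β) (L : List (DeltaOp α β ρ)) (k : α) :
    Option β :=
  (B k).or (addedContent L k)

theorem seededBase_eq_or (B : α → Option β) (L : List (DeltaOp α β ρ)) (k : α) :
    seededBase B L k = B k ∨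
      (B k = none ∧ ∃ c d, (c, k, Sum.inl (some d)) ∈ L ∧ seededBase B L k = some d) := by
  rcases hB : B k with _ | b
  · rcases hA : addedContent L k with _ | d
    · simp [seededBase, hB, hA]
    · obtain ⟨c, hc⟩ := exists_mem_of_addedContent_eq_some hA
      exact Or.inr ⟨rfl, c, d, hc, by simp [seededBase, hB, hA]⟩
  · simp [seededBase, hB]

theorem seededBase_ne_none_of_mem {B : α → Option β} {L : List (DeltaOp α β ρ)}
    {c : ρ → Prop} {k : α} {d : β} (h : (c, k, Sum.inl (some d)) ∈ L) :
    seededBase B L k ≠ none := by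
  simpa [seededBase] using fun _ => addedContent_ne_none_of_mem h

theorem seededBase_eq_of_notMem {B : α → Option β} {L : List (DeltaOp α β ρ)} {k : α}
    (hk : k ∉ L.map (·.2.1)) : seededBase B L k = B k := by
  rcases hA : addedContent L k with _ | d
  · simp [seededBase, hA]
  · obtain ⟨c, hc⟩ := exists_mem_of_addedContent_eq_some hA
    exact absurd (List.mem_map.mpr ⟨_, hc, rfl⟩) hk

theorem variant_seededBase_resetOps (B : α → Option β) (L : List (DeltaOp α β ρ)) (p : ρ) :
    variant (seededBase B L) (resetOps B (L.map (·.2.1))) p = B := by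
  rw [variant_resetOps]
  funext k
  split_ifs with hk
  · rfl
  · exact seededBase_eq_of_notMem hk

end Seeding

/-- Readd-pseudo-decreasing refactoring theorem in the presence of modify
operations. -/
theorem readd_pseudo_decreasing_refactoring {α β ρ : Type*} (B : α → Option β)
    (L : List ((ρ → Prop) × α × (Option β ⊕ (β → β)))) :
    ∃ (B' : α → Option β) (L' : List ((ρ → Prop) × α × (Option β ⊕ (β → β)))),
      (∀ p : ρ, variant B' L' p = variant B L p) ∧
      (∀ (c' : ρ → Prop) (k : α) (d : β), (c', k, Sum.inl (some d)) ∈ L' →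
        B' k ≠ none) ∧
      (∀ (c' : ρ → Prop) (k : α) (f : β → β), (c', k, Sum.inr f) ∈ L' →
        ∃ c : ρ → Prop, (c, k, Sum.inr f) ∈ L) ∧
      (∀ k : α, B' k = B k ∨
        (B k = none ∧ ∃ (c : ρ → Prop) (d : β),
          (c, k, Sum.inl (some d)) ∈ L ∧ B' k = some d)) := by
  refine ⟨seededBase B L, resetOps B (L.map (·.2.1)) ++ L, fun p => ?_, ?_, ?_,
    seededBase_eq_or B L⟩
  · rw [variant_append, variant_seededBase_resetOps]
  · intro c' k d hmem
    rcases List.mem_append.mp hmem with hreset | hL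
    · have hBk : B k = some d := (Sum.inl_injective (update_eq_of_mem_resetOps hreset)).symm
      simp [seededBase, hBk]
    · exact seededBase_ne_none_of_mem hL
  · intro c' k f hmem
    rcases List.mem_append.mp hmem with hreset | hL
    · exact absurd (update_eq_of_mem_resetOps hreset) Sum.inr_ne_inl
    · exact ⟨c', hL⟩
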